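/- arXiv:1212.4266 — 5 statements merged into one kernel-verified Lean document; each statement's English description precedes it below -/
import Mathlib

section
/- Let X be a real Banach space, let A, B : X ⇉ X* be monotone operators with dom A ∩ dom B ≠ ∅, let C := {(x, x) : x ∈ X} ⊆ X × X be the diagonal, and let T : X × X ⇉ X* × X* be defined by T(x, y) := A x × B y. Then A + B is maximally monotone if and only if T + N_C is maximally monotone. -/
open Set Pointwise

variable {X : Type*} [NormedAddCommGroup X] [NormedSpace ℝ X] [CompleteSpace X]

/-- The graph of a set-valued operator from `X` to its continuous dual. -/
def graphOf (A : X → Set (X →L[ℝ] ℝ)) : Set (X × (X →L[ℝ] ℝ)) := {p | p.2 ∈ A p.1}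

/-- The domain of a set-valued operator. -/
def domOf (A : X → Set (X →L[ℝ] ℝ)) : Set X := {x | (A x).Nonempty}

/-- Monotonicity of a set-valued operator. -/
def IsMonotoneOp (A : X → Set (X →L[ℝ] ℝ)) : Prop :=
  ∀ ⦃x y : X⦄ ⦃x' y' : X →L[ℝ] ℝ⦄, x' ∈ A x → y' ∈ A y → 0 ≤ (x' - y') (x - y)

/-- Maximal monotonicity: monotone and no proper monotone extension of the graph. -/
def IsMaxMonotoneOp (A : X → Set (X →L[ℝ] ℝ)) : Prop :=
  IsMonotoneOp A ∧ ∀ B : X → Set (X →L[ℝ] ℝ), IsMonotoneOp B →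
    graphOf A ⊆ graphOf B → graphOf B = graphOf A

/-- A linear relation: the graph is a linear subspace of `X × X*`. -/
def IsLinearRelationOp (A : X → Set (X →L[ℝ] ℝ)) : Prop :=
  ∃ S : Submodule ℝ (X × (X →L[ℝ] ℝ)), (S : Set (X × (X →L[ℝ] ℝ))) = graphOf A

/-- The pointwise (Minkowski) sum of two set-valued operators. -/
def opSum (A B : X → Set (X →L[ℝ] ℝ)) : X → Set (X →L[ℝ] ℝ) :=
  fun x => {s | ∃ a ∈ A x, ∃ b ∈ B x, s = a + b}

/-- The duality pairing on `(X × X) × (X* × X*)`: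
`⟨(x, y), (x*, y*)⟩ = ⟨x, x*⟩ + ⟨y, y*⟩`. -/
def pair2 (v : X × X) (w : (X →L[ℝ] ℝ) × (X →L[ℝ] ℝ)) : ℝ := w.1 v.1 + w.2 v.2

/-- The graph of a set-valued operator from `X × X` to `X* × X*`. -/
def graphOf2 (T : X × X → Set ((X →L[ℝ] ℝ) × (X →L[ℝ] ℝ))) :
    Set ((X × X) × ((X →L[ℝ] ℝ) × (X →L[ℝ] ℝ))) := {p | p.2 ∈ T p.1}

/-- Monotonicity of a set-valued operator on the product space. -/
def IsMonotoneOp2 (T : X × X → Set ((X →L[ℝ] ℝ) × (X →L[ℝ] ℝ))) : Prop :=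
  ∀ ⦃u v : X × X⦄ ⦃u' v' : (X →L[ℝ] ℝ) × (X →L[ℝ] ℝ)⦄,
    u' ∈ T u → v' ∈ T v → 0 ≤ pair2 (u - v) (u' - v')

/-- Maximal monotonicity on the product space. -/
def IsMaxMonotoneOp2 (T : X × X → Set ((X →L[ℝ] ℝ) × (X →L[ℝ] ℝ))) : Prop :=
  IsMonotoneOp2 T ∧ ∀ S : X × X → Set ((X →L[ℝ] ℝ) × (X →L[ℝ] ℝ)), IsMonotoneOp2 S →
    graphOf2 T ⊆ graphOf2 S → graphOf2 S = graphOf2 T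

/-- The pointwise (Minkowski) sum of two set-valued operators on the product space. -/
def opSum2 (S T : X × X → Set ((X →L[ℝ] ℝ) × (X →L[ℝ] ℝ))) :
    X × X → Set ((X →L[ℝ] ℝ) × (X →L[ℝ] ℝ)) :=
  fun w => {s | ∃ a ∈ S w, ∃ b ∈ T w, s = a + b}

/-- The normal cone operator of a set `C ⊆ X × X` (empty value outside `C`). -/
def normalConeOp2 (C : Set (X × X)) (w : X × X) : Set ((X →L[ℝ] ℝ) × (X →L[ℝ] ℝ)) :=
  {w' | w ∈ C ∧ ∀ v ∈ C, pair2 (v - w) w' ≤ 0}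

/-!
`N_C (x, y)` is `{(u, -u)}` when `x = y` and empty otherwise, so `T + N_C` is the lift
`(x, y) ↦ {(p, q) | x = y, p + q ∈ (A + B) x}` of `A + B` to the diagonal, and it suffices to show
that lifting an operator `R` in this way preserves and reflects maximal monotonicity.
A monotone extension `S` of the lift stays on the diagonal: if `R z ∋ r`, then `S` must be
monotone against all the points `((z, z), (r + u, -u))`, `u ∈ X*`, which forces
`u (y - x)` to be bounded below in `u`, hence `x = y` because the dual separates points.
On the diagonal, adding the two components of `S` gives a monotone extension of `R`.
-/

section

variable {E : Type*} [NormedAddCommGroup E] [NormedSpace ℝ E]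

lemma eq_zero_of_forall_dual_bddBelow {v : E} {c : ℝ} (h : ∀ u : E →L[ℝ] ℝ, c ≤ u v) :
    v = 0 := by
  refine SeparatingDual.eq_zero_of_forall_dual_eq_zero (R := ℝ) fun u => ?_
  by_contra hu
  have := h (((c - 1) / u v) • u)
  simp only [smul_apply, smul_eq_mul, div_mul_cancel₀ _ hu] at this
  linarith

@[simp]
lemma mem_graphOf {R : E → Set (E →L[ℝ] ℝ)} {x : E} {r : E →L[ℝ] ℝ} :
    (x, r) ∈ graphOf R ↔ r ∈ R x :=
  Iff.rfl

@[simp]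
lemma pair2_mk_self (z : E) (w : (E →L[ℝ] ℝ) × (E →L[ℝ] ℝ)) : pair2 (z, z) w = (w.1 + w.2) z :=
  rfl

def diagonalLift (R : E → Set (E →L[ℝ] ℝ)) : E × E → Set ((E →L[ℝ] ℝ) × (E →L[ℝ] ℝ)) :=
  fun w => {s | w.1 = w.2 ∧ s.1 + s.2 ∈ R w.1}

def diagonalSum (S : E × E → Set ((E →L[ℝ] ℝ) × (E →L[ℝ] ℝ))) : E → Set (E →L[ℝ] ℝ) :=
  fun z => {r | ∃ p q, p + q = r ∧ (p, q) ∈ S (z, z)}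

lemma mem_normalConeOp2_diagonal {x y : E} {u v : E →L[ℝ] ℝ} :
    (u, v) ∈ normalConeOp2 {p : E × E | p.1 = p.2} (x, y) ↔ x = y ∧ u + v = 0 := by
  constructor
  · rintro ⟨(rfl : x = y), hcone⟩
    refine ⟨rfl, ContinuousLinearMap.ext fun w => ?_⟩
    have hplus := hcone (x + w, x + w) rfl
    have hminus := hcone (x - w, x - w) rfl
    simp only [Prod.mk_sub_mk, add_sub_cancel_left, sub_sub_cancel_left, pair2_mk_self,
      map_neg] at hplus hminus
    simp only [zero_apply]
    linarith
  · rintro ⟨rfl, huv⟩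
    refine ⟨rfl, ?_⟩
    rintro ⟨z, z'⟩ (rfl : z = z')
    simp [huv]

lemma opSum2_prod_normalConeOp2_diagonal (A B : E → Set (E →L[ℝ] ℝ)) :
    opSum2 (fun p => A p.1 ×ˢ B p.2) (normalConeOp2 {p : E × E | p.1 = p.2}) =
      diagonalLift (opSum A B) := by
  funext ⟨x, y⟩
  ext ⟨p, q⟩
  constructor
  · rintro ⟨⟨a, b⟩, ⟨ha, hb⟩, ⟨u, v⟩, hN, hpq⟩
    obtain ⟨rfl, huv⟩ := mem_normalConeOp2_diagonal.mp hN
    obtain ⟨rfl, rfl⟩ := Prod.mk.inj hpq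
    refine ⟨rfl, a, ha, b, hb, ?_⟩
    rw [add_add_add_comm, huv, add_zero]
  · rintro ⟨(rfl : x = y), a, ha, b, hb, hab⟩
    refine ⟨(a, b), ⟨ha, hb⟩, (p - a, q - b), mem_normalConeOp2_diagonal.mpr ⟨rfl, ?_⟩, by simp⟩
    rw [sub_add_sub_comm, hab, sub_self]

lemma isMonotoneOp2_diagonalLift_iff {R : E → Set (E →L[ℝ] ℝ)} :
    IsMonotoneOp2 (diagonalLift R) ↔ IsMonotoneOp R := by
  constructor
  · intro h x y r r' hr hr'
    have := @h (x, x) (y, y) (r, 0) (r', 0) ⟨rfl, by simpa using hr⟩ ⟨rfl, by simpa using hr'⟩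
    simpa using this
  · rintro h ⟨x, x'⟩ ⟨y, y'⟩ ⟨p, q⟩ ⟨p', q'⟩ ⟨(rfl : x = x'), hpq⟩ ⟨(rfl : y = y'), hpq'⟩
    have := h hpq hpq'
    simp only [Prod.mk_sub_mk, pair2_mk_self] at this ⊢
    simpa [sub_add_sub_comm] using this

lemma graphOf2_diagonalLift_subset {R S : E → Set (E →L[ℝ] ℝ)} (h : graphOf R ⊆ graphOf S) :
    graphOf2 (diagonalLift R) ⊆ graphOf2 (diagonalLift S) :=
  fun ⟨⟨x, _⟩, ⟨p, q⟩⟩ ⟨hw, hs⟩ => ⟨hw, @h (x, p + q) hs⟩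

lemma IsMonotoneOp2.diagonalSum {S : E × E → Set ((E →L[ℝ] ℝ) × (E →L[ℝ] ℝ))}
    (hS : IsMonotoneOp2 S) : IsMonotoneOp (diagonalSum S) := by
  rintro x y _ _ ⟨p, q, rfl, hpq⟩ ⟨p', q', rfl, hpq'⟩
  have := hS hpq hpq'
  simp only [Prod.mk_sub_mk, pair2_mk_self] at this
  simpa [sub_add_sub_comm] using this

lemma graphOf_subset_diagonalSum {R : E → Set (E →L[ℝ] ℝ)}
    {S : E × E → Set ((E →L[ℝ] ℝ) × (E →L[ℝ] ℝ))}
    (h : graphOf2 (diagonalLift R) ⊆ graphOf2 S) : graphOf R ⊆ graphOf (diagonalSum S) :=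
  fun ⟨x, r⟩ hr => ⟨r, 0, add_zero r, @h ((x, x), (r, 0)) ⟨rfl, by simpa using hr⟩⟩

lemma IsMaxMonotoneOp.graphOf_nonempty {R : E → Set (E →L[ℝ] ℝ)} (h : IsMaxMonotoneOp R) :
    (graphOf R).Nonempty := by
  by_contra hR
  have hzero : IsMonotoneOp fun _ : E => ({0} : Set (E →L[ℝ] ℝ)) := by
    rintro x y _ _ rfl rfl
    simp
  have := h.2 _ hzero (by simp [not_nonempty_iff_eq_empty.mp hR])
  exact hR (this ▸ ⟨(0, 0), rfl⟩)

lemma fst_eq_snd_of_diagonalLift_subset {R : E → Set (E →L[ℝ] ℝ)}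
    {S : E × E → Set ((E →L[ℝ] ℝ) × (E →L[ℝ] ℝ))} (hR : (graphOf R).Nonempty)
    (hS : IsMonotoneOp2 S) (hsub : graphOf2 (diagonalLift R) ⊆ graphOf2 S)
    {w : E × E} {s : (E →L[ℝ] ℝ) × (E →L[ℝ] ℝ)} (hs : s ∈ S w) : w.1 = w.2 := by
  obtain ⟨⟨z, r⟩, hr⟩ := hR
  have hbdd : ∀ u : E →L[ℝ] ℝ,
      -((s.1 - r) (w.1 - z) + s.2 (w.2 - z)) ≤ u (w.2 - w.1) := by
    intro u
    have hu : ((z, z), (r + u, -u)) ∈ graphOf2 S := hsub ⟨rfl, by simpa using hr⟩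
    have := hS hs hu
    simp only [pair2, Prod.fst_sub, Prod.snd_sub, sub_apply, add_apply, neg_apply, map_sub]
      at this ⊢
    linarith
  exact (sub_eq_zero.mp (eq_zero_of_forall_dual_bddBelow hbdd)).symm

lemma IsMaxMonotoneOp.isMaxMonotoneOp2_diagonalLift {R : E → Set (E →L[ℝ] ℝ)}
    (h : IsMaxMonotoneOp R) : IsMaxMonotoneOp2 (diagonalLift R) := by
  refine ⟨isMonotoneOp2_diagonalLift_iff.mpr h.1, fun S hS hsub => Subset.antisymm ?_ hsub⟩
  rintro ⟨⟨x, y⟩, s⟩ hs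
  obtain rfl : x = y := fst_eq_snd_of_diagonalLift_subset h.graphOf_nonempty hS hsub hs
  have hsum : (x, s.1 + s.2) ∈ graphOf (diagonalSum S) := ⟨s.1, s.2, rfl, hs⟩
  rw [h.2 _ hS.diagonalSum (graphOf_subset_diagonalSum hsub)] at hsum
  exact ⟨rfl, hsum⟩

lemma IsMaxMonotoneOp.of_diagonalLift {R : E → Set (E →L[ℝ] ℝ)}
    (h : IsMaxMonotoneOp2 (diagonalLift R)) : IsMaxMonotoneOp R := by
  refine ⟨isMonotoneOp2_diagonalLift_iff.mp h.1, fun S hS hsub => Subset.antisymm ?_ hsub⟩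
  rintro ⟨x, r⟩ hr
  have hlift : ((x, x), (r, 0)) ∈ graphOf2 (diagonalLift S) := ⟨rfl, by simpa using hr⟩
  rw [h.2 _ (isMonotoneOp2_diagonalLift_iff.mpr hS) (graphOf2_diagonalLift_subset hsub)] at hlift
  simpa using hlift.2

lemma isMaxMonotoneOp2_diagonalLift_iff {R : E → Set (E →L[ℝ] ℝ)} :
    IsMaxMonotoneOp2 (diagonalLift R) ↔ IsMaxMonotoneOp R :=
  ⟨IsMaxMonotoneOp.of_diagonalLift, IsMaxMonotoneOp.isMaxMonotoneOp2_diagonalLift⟩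

end

theorem stmt4_general (A B : X → Set (X →L[ℝ] ℝ))
    (C : Set (X × X)) (hC : C = {p : X × X | p.1 = p.2})
    (T : X × X → Set ((X →L[ℝ] ℝ) × (X →L[ℝ] ℝ)))
    (hT : T = fun p => (A p.1) ×ˢ (B p.2)) :
    IsMaxMonotoneOp (opSum A B) ↔ IsMaxMonotoneOp2 (opSum2 T (normalConeOp2 C)) := by
  subst hC hT
  rw [opSum2_prod_normalConeOp2_diagonal, isMaxMonotoneOp2_diagonalLift_iff]

/-- For monotone `A, B` with `dom A ∩ dom B ≠ ∅`, the diagonal `C` and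
`T (x, y) := A x × B y`, the sum `A + B` is maximally monotone iff `T + N_C` is. -/
theorem stmt4 (A B : X → Set (X →L[ℝ] ℝ))
    (hA : IsMonotoneOp A) (hB : IsMonotoneOp B)
    (hdom : (domOf A ∩ domOf B).Nonempty)
    (C : Set (X × X)) (hC : C = {p : X × X | p.1 = p.2})
    (T : X × X → Set ((X →L[ℝ] ℝ) × (X →L[ℝ] ℝ)))
    (hT : T = fun p => (A p.1) ×ˢ (B p.2)) :
    IsMaxMonotoneOp (opSum A B) ↔ IsMaxMonotoneOp2 (opSum2 T (normalConeOp2 C)) :=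
  stmt4_general A B C hC T hT
end

section
/- Let X be a real Banach space, let A, B : X ⇉ X* be monotone operators with dom A ∩ dom B ≠ ∅, let C := {(x, x) : x ∈ X} ⊆ X × X be the diagonal, and let T : X × X ⇉ X* × X* be defined by T(x, y) := A x × B y. If T + N_C is maximally monotone, then A + B is maximally monotone. -/
open Set Pointwise

variable {X : Type*} [NormedAddCommGroup X] [NormedSpace ℝ X] [CompleteSpace X]

/-!
On the diagonal `C`, the normal cone is `N_C (x, x) = {(w*, -w*)}`, so
`(x*, y*) ∈ (T + N_C) (x, x)` exactly when `x* + y* ∈ (A + B) x`; in particular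
`s ∈ (A + B) x ↔ (s, 0) ∈ (T + N_C) (x, x)`. Moreover
`⟨(x, x) - (z, z), (x*, y*) - (z*, 0)⟩ = ⟨x - z, x* + y* - z*⟩`. Hence monotonicity of `T + N_C`
restricts to `A + B`, and if `(z, z*)` is monotonically related to the graph of `A + B`, then
`((z, z), (z*, 0))` is monotonically related to the graph of `T + N_C`, so it belongs to that
graph by maximality, i.e. `z* ∈ (A + B) z`.
-/

section

variable {E : Type*} [NormedAddCommGroup E] [NormedSpace ℝ E]

theorem pair2_neg_neg (v : E × E) (w : (E →L[ℝ] ℝ) × (E →L[ℝ] ℝ)) :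
    pair2 (-v) (-w) = pair2 v w := by
  simp [pair2]

@[simp]
theorem pair2_diag (x : E) (w : (E →L[ℝ] ℝ) × (E →L[ℝ] ℝ)) :
    pair2 (x, x) w = (w.1 + w.2) x := rfl

theorem IsMaxMonotoneOp2.mem_of_forall_le {T : E × E → Set ((E →L[ℝ] ℝ) × (E →L[ℝ] ℝ))}
    (hT : IsMaxMonotoneOp2 T) {v : E × E} {v' : (E →L[ℝ] ℝ) × (E →L[ℝ] ℝ)}
    (hv : ∀ ⦃u u'⦄, u' ∈ T u → 0 ≤ pair2 (v - u) (v' - u')) : v' ∈ T v := by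
  let S : E × E → Set ((E →L[ℝ] ℝ) × (E →L[ℝ] ℝ)) := fun u => T u ∪ {u' | u = v ∧ u' = v'}
  have hS : IsMonotoneOp2 S := by
    rintro u w u' w' (hu | ⟨rfl, rfl⟩) (hw | ⟨rfl, rfl⟩)
    · exact hT.1 hu hw
    · rw [← pair2_neg_neg, neg_sub, neg_sub]
      exact hv hu
    · exact hv hw
    · simp [pair2]
  have hgraph : graphOf2 S = graphOf2 T := hT.2 S hS fun p hp => Or.inl hp
  have hmem : (v, v') ∈ graphOf2 S := Or.inr ⟨rfl, rfl⟩
  rwa [hgraph] at hmem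

theorem mem_normalConeOp2_diagonal_iff {w : E × E} {n : (E →L[ℝ] ℝ) × (E →L[ℝ] ℝ)} :
    n ∈ normalConeOp2 {p : E × E | p.1 = p.2} w ↔ w.1 = w.2 ∧ n.2 = -n.1 := by
  obtain ⟨x, y⟩ := w
  refine ⟨fun ⟨hxy, hn⟩ => ⟨hxy, ?_⟩, fun ⟨hxy, hn⟩ => ⟨hxy, ?_⟩⟩
  · change x = y at hxy
    subst hxy
    have hle : ∀ u : E, n.1 u + n.2 u ≤ 0 := fun u => by
      simpa using hn (x + u, x + u) rfl
    ext u
    have := hle (-u)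
    simp only [map_neg] at this
    simp
    linarith [hle u]
  · change x = y at hxy
    subst hxy
    rintro ⟨v, v₂⟩ (hv : v = v₂)
    subst hv
    simp [hn]

theorem mem_opSum2_prod_normalConeOp2_diagonal_iff {A B : E → Set (E →L[ℝ] ℝ)} {u : E × E}
    {u' : (E →L[ℝ] ℝ) × (E →L[ℝ] ℝ)} :
    u' ∈ opSum2 (fun p => A p.1 ×ˢ B p.2) (normalConeOp2 {p : E × E | p.1 = p.2}) u ↔
      u.1 = u.2 ∧ u'.1 + u'.2 ∈ opSum A B u.1 := by
  simp only [opSum2, opSum, mem_ofPred_eq, mem_normalConeOp2_diagonal_iff]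
  constructor
  · rintro ⟨a, ⟨ha, hb⟩, n, ⟨hu, hn⟩, rfl⟩
    refine ⟨hu, a.1, ha, a.2, hu ▸ hb, ?_⟩
    simp [hn]
    abel
  · rintro ⟨hu, a, ha, b, hb, hsum⟩
    refine ⟨(a, b), ⟨ha, hu ▸ hb⟩, (u'.1 - a, u'.2 - b), ⟨hu, ?_⟩, by ext <;> simp⟩
    refine eq_neg_of_add_eq_zero_left ?_
    rw [sub_add_sub_comm, add_comm u'.2, hsum, add_comm b, sub_self]

end

theorem stmt6_general (A B : X → Set (X →L[ℝ] ℝ))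
    (C : Set (X × X)) (hC : C = {p : X × X | p.1 = p.2})
    (T : X × X → Set ((X →L[ℝ] ℝ) × (X →L[ℝ] ℝ)))
    (hT : T = fun p => (A p.1) ×ˢ (B p.2))
    (hTN : IsMaxMonotoneOp2 (opSum2 T (normalConeOp2 C))) :
    IsMaxMonotoneOp (opSum A B) := by
  subst hC hT
  have hdiag : ∀ {x : X} {s : X →L[ℝ] ℝ}, s ∈ opSum A B x →
      (s, 0) ∈ opSum2 (fun p => A p.1 ×ˢ B p.2) (normalConeOp2 {p : X × X | p.1 = p.2}) (x, x) :=
    fun hs => mem_opSum2_prod_normalConeOp2_diagonal_iff.2 ⟨rfl, by simpa using hs⟩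
  refine ⟨fun x y s t hs ht => ?_, fun S hS hsub => ?_⟩
  · simpa only [Prod.mk_sub_mk, pair2_diag, Prod.fst_sub, Prod.snd_sub, sub_zero, add_zero]
      using hTN.1 (hdiag hs) (hdiag ht)
  refine Subset.antisymm (fun ⟨z, z'⟩ hz => ?_) hsub
  have hrel : (z', 0) ∈ opSum2 (fun p => A p.1 ×ˢ B p.2)
      (normalConeOp2 {p : X × X | p.1 = p.2}) (z, z) := by
    refine hTN.mem_of_forall_le fun u u' hu' => ?_
    obtain ⟨hu, hs⟩ := mem_opSum2_prod_normalConeOp2_diagonal_iff.1 hu'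
    obtain ⟨x, _⟩ := u
    simp only at hu
    subst hu
    have hsz : ((z', 0) - u').1 + ((z', 0) - u').2 = z' - (u'.1 + u'.2) := by
      simp only [Prod.fst_sub, Prod.snd_sub]
      abel
    rw [Prod.mk_sub_mk, pair2_diag, hsz]
    exact hS hz (hsub (show (x, _) ∈ graphOf (opSum A B) from hs))
  have hz' : z' ∈ opSum A B z := by
    simpa only [add_zero] using (mem_opSum2_prod_normalConeOp2_diagonal_iff.1 hrel).2
  exact hz'

/-- For monotone `A, B` with `dom A ∩ dom B ≠ ∅`, the diagonal `C` and
`T (x, y) := A x × B y`: if `T + N_C` is maximally monotone, then so is `A + B`. -/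
theorem stmt6 (A B : X → Set (X →L[ℝ] ℝ))
    (hA : IsMonotoneOp A) (hB : IsMonotoneOp B)
    (hdom : (domOf A ∩ domOf B).Nonempty)
    (C : Set (X × X)) (hC : C = {p : X × X | p.1 = p.2})
    (T : X × X → Set ((X →L[ℝ] ℝ) × (X →L[ℝ] ℝ)))
    (hT : T = fun p => (A p.1) ×ˢ (B p.2))
    (hTN : IsMaxMonotoneOp2 (opSum2 T (normalConeOp2 C))) :
    IsMaxMonotoneOp (opSum A B) :=
  stmt6_general A B C hC T hT hTN
end

section
/- Let X be a real Banach space and let A, B : X ⇉ X* be maximally monotone operators with dom A ∩ int(dom B) ≠ ∅. Then ⋃_{λ>0} λ·(P_X(dom F_A) − P_X(dom F_B)) = X, where F_A and F_B are the Fitzpatrick functions of A and B, dom F denotes the set where F is finite, and P_X : X × X* → X is the projection (x, x*) ↦ x. -/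
open Set Pointwise

variable {X : Type*} [NormedAddCommGroup X] [NormedSpace ℝ X] [CompleteSpace X]

/-- `(x, x*)` is monotonically related to the set `G ⊆ X × X*`. -/
def MonRelTo (p : X × (X →L[ℝ] ℝ)) (G : Set (X × (X →L[ℝ] ℝ))) : Prop :=
  ∀ q ∈ G, 0 ≤ (p.2 - q.2) (p.1 - q.1)

/-- The normal cone operator of a set `C ⊆ X` (empty value outside `C`). -/
def normalConeOp (C : Set X) (x : X) : Set (X →L[ℝ] ℝ) :=
  {x' | x ∈ C ∧ ∀ c ∈ C, x' (c - x) ≤ 0}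

/-- The Fitzpatrick function of a set-valued operator, with values in `(-∞, +∞]` (`EReal`). -/
noncomputable def fitz (A : X → Set (X →L[ℝ] ℝ)) : X × (X →L[ℝ] ℝ) → EReal :=
  fun p => sSup ((fun q : X × (X →L[ℝ] ℝ) =>
    ((q.2 p.1 + p.2 q.1 - q.2 q.1 : ℝ) : EReal)) '' graphOf A)

/-! For monotone `A` and `x* ∈ A x`, monotonicity gives `F_A (x, x*) ≤ ⟨x*, x⟩`, so
`dom A ⊆ P_X (dom F_A)`. Hence the difference of the two projections contains
`dom A - int (dom B)`, which is a neighbourhood of `0` and therefore absorbing. -/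

open scoped Topology

section TopologicalVectorSpace

variable {E : Type*} [AddCommGroup E] [Module ℝ E] [TopologicalSpace E] [IsTopologicalAddGroup E]
  [ContinuousSMul ℝ E]

theorem iUnion_pos_smul_sub_eq_univ {S T : Set E} {x₀ : E} (hS : x₀ ∈ S) (hT : T ∈ 𝓝 x₀) :
    ⋃ l ∈ Ioi (0 : ℝ), l • (S - T) = univ := by
  have hU : {y | x₀ - y ∈ T} ∈ 𝓝 (0 : E) :=
    (continuous_const.sub continuous_id).continuousAt.preimage_mem_nhds (by simpa using hT)
  have hUsub : {y | x₀ - y ∈ T} ⊆ S - T := fun y hy => ⟨x₀, hS, x₀ - y, hy, sub_sub_cancel x₀ y⟩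
  refine eq_univ_of_forall fun x => ?_
  obtain ⟨r, hr, hx⟩ := (absorbent_nhds_zero (𝕜 := ℝ) hU x).exists_pos
  exact mem_biUnion (mem_Ioi.2 hr)
    (smul_set_mono hUsub (hx r (by rw [Real.norm_of_nonneg hr.le]) rfl))

end TopologicalVectorSpace

omit [CompleteSpace X] in
theorem fitz_le_apply_of_mem {A : X → Set (X →L[ℝ] ℝ)} (hA : IsMonotoneOp A) {x : X}
    {x' : X →L[ℝ] ℝ} (hx : x' ∈ A x) : fitz A (x, x') ≤ (x' x : ℝ) := by
  refine sSup_le ?_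
  rintro _ ⟨⟨y, y'⟩, hy, rfl⟩
  have hmono := hA hx hy
  simp only [sub_apply, map_sub] at hmono
  exact EReal.coe_le_coe_iff.2 (by linarith)

omit [CompleteSpace X] in
theorem domOf_subset_fst_fitz_lt_top {A : X → Set (X →L[ℝ] ℝ)} (hA : IsMonotoneOp A) :
    domOf A ⊆ Prod.fst '' {p | fitz A p < ⊤} := fun x ⟨x', hx'⟩ =>
  ⟨(x, x'), (fitz_le_apply_of_mem hA hx').trans_lt (EReal.coe_lt_top _), rfl⟩

/-- If `A, B` are maximally monotone with `dom A ∩ int (dom B) ≠ ∅`, then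
`⋃_{λ > 0} λ • (P_X (dom F_A) - P_X (dom F_B)) = X`. -/
theorem stmt9 (A B : X → Set (X →L[ℝ] ℝ))
    (hA : IsMaxMonotoneOp A) (hB : IsMaxMonotoneOp B)
    (hCQ : (domOf A ∩ interior (domOf B)).Nonempty) :
    ⋃ l ∈ Set.Ioi (0 : ℝ),
      l • ((Prod.fst '' {p | fitz A p < ⊤}) - (Prod.fst '' {p | fitz B p < ⊤}))
      = (univ : Set X) := by
  obtain ⟨x₀, hx₀A, hx₀B⟩ := hCQ
  exact iUnion_pos_smul_sub_eq_univ (domOf_subset_fst_fitz_lt_top hA.1 hx₀A)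
    (Filter.mem_of_superset (mem_interior_iff_mem_nhds.1 hx₀B)
      (domOf_subset_fst_fitz_lt_top hB.1))
end

section
/- Let X be a real Banach space, let A : X ⇉ X* be a maximally monotone linear relation, and let B : X ⇉ X* be a maximally monotone operator. If w ∈ closure(dom A) ∩ int(dom B), then the Fitzpatrick function of A + B satisfies F_{A+B}(w, w*) ≥ ⟨w, w*⟩ for every w* ∈ X*. -/
/-!
Suppose `F_{A+B}(w, w*) < ⟨w, w*⟩ - η`. A monotone operator is locally bounded on the interior
of its domain (Banach–Steinhaus), so picking `b* ∈ B a` gives `⟨a*, w - a⟩ + η ≤ K ‖w - a‖` for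
all `(a, a*) ∈ gra A` with `a` near `w`. Hence `(w, 0)` is not in the closure of the hypograph
`H = {(a, t) | t ≤ ⟨a*, w - a⟩, a* ∈ A a}`. Since `A` is a monotone linear relation, `H` is convex,
so a functional separates `(w, 0)` from `H`. As `w ∈ closure (dom A)`, its `ℝ`-component is
positive, and after normalising, its `X`-component `v` is monotonically related to `gra A` at `w`;
maximality gives `v ∈ A w`, i.e. `(w, 0) ∈ H`, a contradiction.
-/

open Set Pointwise

variable {X : Type*} [NormedAddCommGroup X] [NormedSpace ℝ X] [CompleteSpace X]

open Filter Topology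

section

variable {E : Type*} [NormedAddCommGroup E] [NormedSpace ℝ E] {A B : E → Set (E →L[ℝ] ℝ)}

theorem IsMonotoneOp.apply_sub_le (hA : IsMonotoneOp A) {x y : E} {x' y' : E →L[ℝ] ℝ}
    (hx : x' ∈ A x) (hy : y' ∈ A y) : x' (y - x) ≤ y' (y - x) := by
  have := hA hy hx
  simp only [sub_apply] at this
  linarith

theorem exists_norm_le_of_forall_apply_le [CompleteSpace E] {ι : Type*} {g : ι → E →L[ℝ] ℝ}
    (h : ∀ v, ∃ C, ∀ i, g i v ≤ C) : ∃ C, ∀ i, ‖g i‖ ≤ C := by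
  refine banach_steinhaus fun v => ?_
  obtain ⟨C₁, hC₁⟩ := h v
  obtain ⟨C₂, hC₂⟩ := h (-v)
  refine ⟨max C₁ C₂, fun i => abs_le.2 ⟨?_, le_max_of_le_left (hC₁ i)⟩⟩
  have := hC₂ i
  rw [map_neg] at this
  linarith [le_max_right C₁ C₂]

theorem exists_pos_add_smul_mem_of_mem_interior {s : Set E} {w : E} (hw : w ∈ interior s)
    (v : E) : ∃ t > (0 : ℝ), w + t • v ∈ s := by
  have hcont : Tendsto (fun t : ℝ => w + t • v) (𝓝[>] 0) (𝓝 w) := by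
    refine tendsto_nhdsWithin_of_tendsto_nhds ?_
    simpa using ((continuous_id.smul continuous_const).const_add w).tendsto (0 : ℝ)
  have hev : ∀ᶠ t in 𝓝[>] (0 : ℝ), w + t • v ∈ s :=
    hcont.eventually (mem_interior_iff_mem_nhds.1 hw)
  obtain ⟨t, hts, ht⟩ := (hev.and self_mem_nhdsWithin).exists
  exact ⟨t, ht, hts⟩

/-- The rescaling `(1 + ‖u‖ ‖x - w‖)⁻¹ • u` makes `u ∈ B x`, `x` near `w`, pointwise bounded;
Banach–Steinhaus then bounds it uniformly, which bounds `‖u‖` once `‖x - w‖` is small. -/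
theorem IsMonotoneOp.exists_eventually_norm_le [CompleteSpace E]
    (hB : IsMonotoneOp B) {w : E} (hw : w ∈ interior (domOf B)) :
    ∃ M, ∀ᶠ x in 𝓝 w, ∀ u ∈ B x, ‖u‖ ≤ M := by
  let ι := {p : E × (E →L[ℝ] ℝ) // p ∈ graphOf B ∧ ‖p.1 - w‖ ≤ 1}
  let scale : ι → ℝ := fun i => 1 + ‖i.1.2‖ * ‖i.1.1 - w‖
  have one_le_scale (i : ι) : 1 ≤ scale i := le_add_of_nonneg_right (by positivity)
  have hbdd : ∀ v, ∃ C, ∀ i : ι, ((scale i)⁻¹ • i.1.2) v ≤ C := by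
    intro v
    obtain ⟨t, ht, y', hy'⟩ := exists_pos_add_smul_mem_of_mem_interior hw v
    refine ⟨(‖y'‖ * (t * ‖v‖ + 1) + 1) / t, fun ⟨⟨x, u⟩, hu, hxw⟩ => ?_⟩
    have hmono := hB.apply_sub_le hu hy'
    have hdist : ‖w + t • v - x‖ ≤ t * ‖v‖ + 1 := by
      calc ‖w + t • v - x‖ = ‖t • v - (x - w)‖ := by congr 1; abel
        _ ≤ ‖t • v‖ + ‖x - w‖ := norm_sub_le _ _
        _ ≤ t * ‖v‖ + 1 := by rw [norm_smul, Real.norm_of_nonneg ht.le]; linarith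
    have hy'bound : y' (w + t • v - x) ≤ ‖y'‖ * (t * ‖v‖ + 1) :=
      (Real.le_norm_self _).trans ((y'.le_opNorm _).trans (by gcongr))
    have hubound : u (x - w) ≤ ‖u‖ * ‖x - w‖ := (Real.le_norm_self _).trans (u.le_opNorm _)
    have hsplit : u (w + t • v - x) = t * u v - u (x - w) := by
      rw [show w + t • v - x = t • v - (x - w) by abel, map_sub, map_smul, smul_eq_mul]
    have hscale := one_le_scale ⟨(x, u), hu, hxw⟩
    simp only [scale] at hscale ⊢
    rw [smul_apply, smul_eq_mul, inv_mul_le_iff₀ (by linarith), ← mul_div_assoc,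
      le_div_iff₀ ht]
    nlinarith [mul_nonneg (sub_nonneg.2 hscale) (by positivity : 0 ≤ ‖y'‖ * (t * ‖v‖ + 1))]
  obtain ⟨C, hC⟩ := exists_norm_le_of_forall_apply_le hbdd
  have hnear : Tendsto (fun x => ‖x - w‖) (𝓝 w) (𝓝 0) := tendsto_norm_sub_self w
  have hnear' : Tendsto (fun x => C * ‖x - w‖) (𝓝 w) (𝓝 0) := by
    simpa using hnear.const_mul C
  refine ⟨2 * C, ?_⟩
  filter_upwards [hnear.eventually_lt_const one_pos,
    hnear'.eventually_lt_const (by norm_num : (0 : ℝ) < 1 / 2)] with x hx₁ hx₂ u hu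
  have hbound := hC ⟨(x, u), hu, hx₁.le⟩
  simp only [scale] at hbound
  rw [norm_smul, norm_inv, Real.norm_of_nonneg (by positivity), inv_mul_le_iff₀ (by positivity)]
    at hbound
  nlinarith [mul_le_mul_of_nonneg_left hx₂.le (norm_nonneg u)]

theorem IsMaxMonotoneOp.mem_of_monRelTo (hA : IsMaxMonotoneOp A)
    {x : E} {x' : E →L[ℝ] ℝ} (h : MonRelTo (x, x') (graphOf A)) : x' ∈ A x := by
  let A' : E → Set (E →L[ℝ] ℝ) := fun y => A y ∪ {y' | y = x ∧ y' = x'}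
  have hA' : IsMonotoneOp A' := by
    rintro y z y' z' (hy | ⟨rfl, rfl⟩) (hz | ⟨rfl, rfl⟩)
    · exact hA.1 hy hz
    · simpa only [← neg_sub y, ← neg_sub y', map_neg, neg_apply, neg_neg] using h (y, y') hy
    · exact h (z, z') hz
    · simp
  have hgraph := hA.2 A' hA' fun p hp => Or.inl hp
  have hmem : (x, x') ∈ graphOf A' := Or.inr ⟨rfl, rfl⟩
  rwa [hgraph] at hmem

theorem IsLinearRelationOp.exists_submodule_eq_domOf (hA : IsLinearRelationOp A) :
    ∃ L : Submodule ℝ E, (L : Set E) = domOf A := by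
  obtain ⟨S, hS⟩ := hA
  refine ⟨S.map (LinearMap.fst ℝ E (E →L[ℝ] ℝ)), Set.ext fun x => ?_⟩
  simp [domOf, Set.Nonempty, hS, graphOf]

theorem IsLinearRelationOp.zero_mem (hA : IsLinearRelationOp A) : (0 : E →L[ℝ] ℝ) ∈ A 0 := by
  obtain ⟨S, hS⟩ := hA
  exact (Set.ext_iff.1 hS 0).1 S.zero_mem

theorem ContinuousLinearMap.eq_zero_of_mem_closure_of_forall_le {L : Submodule ℝ E}
    (f : E →L[ℝ] ℝ) {C : ℝ} (h : ∀ a ∈ L, f a ≤ C) {w : E} (hw : w ∈ closure (L : Set E)) :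
    f w = 0 := by
  refine closure_minimal (fun a ha => ?_) (isClosed_eq f.continuous continuous_const) hw
  by_contra hfa
  have := h (((|C| + 1) / f a) • a) (L.smul_mem _ ha)
  rw [map_smul, smul_eq_mul, div_mul_cancel₀ _ hfa] at this
  linarith [le_abs_self C]

def pairingHypograph (A : E → Set (E →L[ℝ] ℝ)) (w : E) : Set (E × ℝ) :=
  {p | ∃ a' ∈ A p.1, p.2 ≤ a' (w - p.1)}

/-- Along a segment of a linear relation, `⟨a', w - a⟩` exceeds the chord by
`θ (1 - θ) ⟨a' - b', a - b⟩`, which monotonicity makes nonnegative. -/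
theorem convex_pairingHypograph (hA : IsMonotoneOp A) (hlin : IsLinearRelationOp A) (w : E) :
    Convex ℝ (pairingHypograph A w) := by
  obtain ⟨S, hS⟩ := hlin
  rintro ⟨a, s⟩ ⟨a', ha', hs⟩ ⟨b, t⟩ ⟨b', hb', ht⟩ θ τ hθ hτ hθτ
  refine ⟨θ • a' + τ • b', ?_, ?_⟩
  · have hgraph (p) : p ∈ S ↔ p ∈ graphOf A := Set.ext_iff.1 hS p
    exact (hgraph _).1 <| S.add_mem (S.smul_mem θ ((hgraph (a, a')).2 ha'))
      (S.smul_mem τ ((hgraph (b, b')).2 hb'))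
  · have hmono := hA ha' hb'
    obtain rfl : τ = 1 - θ := by linarith
    simp only [sub_apply, map_sub] at hmono hs ht
    simp only [Prod.fst_add, Prod.snd_add, Prod.smul_fst, Prod.smul_snd, smul_eq_mul, add_apply,
      smul_apply, map_sub, map_add, map_smul]
    nlinarith [mul_nonneg (mul_nonneg hθ hτ) hmono, mul_le_mul_of_nonneg_left hs hθ,
      mul_le_mul_of_nonneg_left ht hτ]

theorem IsMaxMonotoneOp.mem_closure_pairingHypograph
    (hA : IsMaxMonotoneOp A) (hlin : IsLinearRelationOp A) {w : E} (hw : w ∈ closure (domOf A)) :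
    (w, (0 : ℝ)) ∈ closure (pairingHypograph A w) := by
  by_contra hnot
  obtain ⟨Λ, c, hΛ, hc⟩ := geometric_hahn_banach_closed_point
    (convex_pairingHypograph hA.1 hlin w).closure isClosed_closure hnot
  set f : E →L[ℝ] ℝ := Λ.comp (ContinuousLinearMap.inl ℝ E ℝ)
  set γ : ℝ := Λ (0, 1)
  have hΛ_apply (a : E) (t : ℝ) : Λ (a, t) = f a + t * γ := by
    have hsplit : ((a, t) : E × ℝ) = (a, 0) + t • (0, 1) := by simp
    rw [hsplit, map_add, map_smul, smul_eq_mul]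
    rfl
  have hsep {a : E} {a' : E →L[ℝ] ℝ} (ha' : a' ∈ A a) {t : ℝ} (ht : t ≤ a' (w - a)) :
      f a + t * γ < c := by
    rw [← hΛ_apply]
    exact hΛ _ (subset_closure ⟨a', ha', ht⟩)
  have hfw : c < f w := by simpa [hΛ_apply] using hc
  have hγ_nonneg : 0 ≤ γ := by
    by_contra! hγ
    have := hsep hlin.zero_mem (t := (|c| + 1) / γ)
      (by simpa using div_nonpos_of_nonneg_of_nonpos (by positivity) hγ.le)
    rw [map_zero, div_mul_cancel₀ _ hγ.ne, zero_add] at this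
    linarith [le_abs_self c]
  have hγ_ne : γ ≠ 0 := by
    intro hγ
    obtain ⟨L, hL⟩ := hlin.exists_submodule_eq_domOf
    have hfL : ∀ a ∈ L, f a ≤ c := fun a ha => by
      obtain ⟨a', ha'⟩ : a ∈ domOf A := hL ▸ ha
      simpa [hγ] using (hsep ha' le_rfl).le
    have hfw_zero := f.eq_zero_of_mem_closure_of_forall_le hfL (hL ▸ hw)
    have := hfL 0 L.zero_mem
    rw [map_zero] at this
    linarith
  have hγ_pos : 0 < γ := lt_of_le_of_ne hγ_nonneg hγ_ne.symm
  have hrel : MonRelTo (w, γ⁻¹ • f) (graphOf A) := by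
    rintro ⟨a, a'⟩ ha'
    have := hsep ha' le_rfl
    show 0 ≤ (γ⁻¹ • f - a') (w - a)
    rw [sub_apply, smul_apply, smul_eq_mul, sub_nonneg, le_inv_mul_iff₀ hγ_pos, map_sub f]
    linarith
  exact hnot (subset_closure ⟨_, hA.mem_of_monRelTo hrel, by simp⟩)

theorem notMem_closure_pairingHypograph {w : E} {η K : ℝ} (hη : 0 < η)
    (h : ∀ᶠ a in 𝓝 w, ∀ a' ∈ A a, a' (w - a) + η ≤ K * ‖w - a‖) :
    (w, (0 : ℝ)) ∉ closure (pairingHypograph A w) := by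
  intro hmem
  obtain ⟨U, hUh, hU, hwU⟩ := _root_.eventually_nhds_iff.1 h
  let T : Set (E × ℝ) := {p | p.2 + η ≤ K * ‖w - p.1‖}
  have hT : IsClosed T := isClosed_le (by fun_prop) (by fun_prop)
  have hsub : Prod.fst ⁻¹' U ∩ pairingHypograph A w ⊆ T := by
    rintro ⟨a, t⟩ ⟨haU, a', ha', ht⟩
    exact (add_le_add_left ht η).trans (hUh a haU a' ha')
  have hwT : (0 : ℝ) + η ≤ K * ‖w - w‖ := hT.closure_subset_iff.2 hsub
    ((hU.preimage continuous_fst).inter_closure ⟨hwU, hmem⟩)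
  rw [sub_self, norm_zero, mul_zero] at hwT
  linarith

theorem exists_pos_forall_le_sub_of_fitz_lt {p : E × (E →L[ℝ] ℝ)} {r : ℝ} (h : fitz A p < r) :
    ∃ η > 0, ∀ q ∈ graphOf A, q.2 p.1 + p.2 q.1 - q.2 q.1 ≤ r - η := by
  obtain ⟨c, hc, hcr⟩ := EReal.lt_iff_exists_real_btwn.1 h
  refine ⟨r - c, sub_pos.2 (EReal.coe_lt_coe_iff.1 hcr), fun q hq => ?_⟩
  have hle : ((q.2 p.1 + p.2 q.1 - q.2 q.1 : ℝ) : EReal) ≤ fitz A p := le_sSup ⟨q, hq, rfl⟩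
  have := EReal.coe_lt_coe_iff.1 (hle.trans_lt hc)
  linarith

theorem apply_sub_add_le_of_forall_opSum_le {w a : E} {w' a' b' : E →L[ℝ] ℝ} {η M : ℝ}
    (hgap : ∀ q ∈ graphOf (opSum A B), q.2 w + w' q.1 - q.2 q.1 ≤ w' w - η)
    (ha' : a' ∈ A a) (hb' : b' ∈ B a) (hb'M : ‖b'‖ ≤ M) :
    a' (w - a) + η ≤ (‖w'‖ + M) * ‖w - a‖ := by
  have hsum := hgap (a, a' + b') ⟨a', ha', b', hb', rfl⟩
  have hw' : w' (w - a) ≤ ‖w'‖ * ‖w - a‖ := (Real.le_norm_self _).trans (w'.le_opNorm _)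
  have hb'' : -b' (w - a) ≤ M * ‖w - a‖ :=
    calc -b' (w - a) ≤ ‖b' (w - a)‖ := neg_le_abs _
      _ ≤ ‖b'‖ * ‖w - a‖ := b'.le_opNorm _
      _ ≤ M * ‖w - a‖ := by gcongr
  simp only [add_apply, map_sub] at hsum hw' hb'' ⊢
  linarith

end

/-- If `A` is a maximally monotone linear relation, `B` is maximally monotone
and `w ∈ closure (dom A) ∩ int (dom B)`, then `F_{A + B} (w, w*) ≥ ⟨w, w*⟩` for all `w*`. -/
theorem stmt11 (A B : X → Set (X →L[ℝ] ℝ))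
    (hA : IsMaxMonotoneOp A) (hAlin : IsLinearRelationOp A)
    (hB : IsMaxMonotoneOp B)
    (w : X) (hw : w ∈ closure (domOf A) ∩ interior (domOf B)) :
    ∀ w' : X →L[ℝ] ℝ, ((w' w : ℝ) : EReal) ≤ fitz (opSum A B) (w, w') := by
  intro w'
  by_contra! hlt
  obtain ⟨η, hη, hgap⟩ := exists_pos_forall_le_sub_of_fitz_lt hlt
  obtain ⟨M, hM⟩ := hB.1.exists_eventually_norm_le hw.2
  refine notMem_closure_pairingHypograph (K := ‖w'‖ + M) hη ?_
    (hA.mem_closure_pairingHypograph hAlin hw.1)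
  filter_upwards [hM, mem_interior_iff_mem_nhds.1 hw.2] with a haM ⟨b', hb'⟩ a' ha'
  exact apply_sub_add_le_of_forall_opSum_le hgap ha' hb' (haM b' hb')
end

section
/- Let X be a real Banach space, let A : X ⇉ X* be a monotone linear relation, and let B : X ⇉ X* be a monotone operator with (0, 0) ∈ gra A ∩ gra B. If (z, z*) ∈ X × X* satisfies F_{A+B}(z, z*) < ⟨z, z*⟩, where F_{A+B} is the Fitzpatrick function of A + B, then ⟨z, a*⟩ = 0 for every a* ∈ A0, i.e., z belongs to the pre-annihilator (A0)^⊥ of the set A0 := {a* ∈ X* : (0, a*) ∈ gra A}. -/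
/-! Since `A` is a linear relation and `(0, 0) ∈ gra B`, for `a* ∈ A 0` the whole line
`{0} × ℝ a*` lies in `gra (A + B)`. Testing the supremum defining `F_{A+B}(z, z*)` at
`(0, t a*)` gives `F_{A+B}(z, z*) ≥ t ⟨z, a*⟩` for every real `t`, so `F_{A+B}(z, z*) = +∞`
unless `⟨z, a*⟩ = 0`. -/

open Set Pointwise

variable {X : Type*} [NormedAddCommGroup X] [NormedSpace ℝ X] [CompleteSpace X]

section

variable {E : Type*} [NormedAddCommGroup E] [NormedSpace ℝ E]

theorem IsLinearRelationOp.smul_mem {A : E → Set (E →L[ℝ] ℝ)} (hA : IsLinearRelationOp A)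
    {x : E} {x' : E →L[ℝ] ℝ} (hx : x' ∈ A x) (t : ℝ) : t • x' ∈ A (t • x) := by
  obtain ⟨S, hS⟩ := hA
  have hmem : (x, x') ∈ S := by rw [← SetLike.mem_coe, hS]; exact hx
  have hsmul : t • (x, x') ∈ (S : Set (E × (E →L[ℝ] ℝ))) := S.smul_mem t hmem
  rwa [hS] at hsmul

theorem mem_opSum_of_zero_mem_right {A B : E → Set (E →L[ℝ] ℝ)} {x : E} {a : E →L[ℝ] ℝ}
    (ha : a ∈ A x) (hB : (0 : E →L[ℝ] ℝ) ∈ B x) : a ∈ opSum A B x :=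
  ⟨a, ha, 0, hB, (add_zero a).symm⟩

theorem le_fitz_of_mem_graphOf {T : E → Set (E →L[ℝ] ℝ)} (p : E × (E →L[ℝ] ℝ))
    {q : E × (E →L[ℝ] ℝ)} (hq : q ∈ graphOf T) :
    ((q.2 p.1 + p.2 q.1 - q.2 q.1 : ℝ) : EReal) ≤ fitz T p :=
  le_sSup ⟨q, hq, rfl⟩

theorem fitz_eq_top_of_forall_smul_mem {T : E → Set (E →L[ℝ] ℝ)} {a' : E →L[ℝ] ℝ}
    (hT : ∀ t : ℝ, t • a' ∈ T 0) (p : E × (E →L[ℝ] ℝ)) (hp : a' p.1 ≠ 0) :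
    fitz T p = ⊤ := by
  refine (EReal.eq_top_iff_forall_lt _).2 fun y => ?_
  set t := (y + 1) / a' p.1
  have hle : ((t • a') p.1 + p.2 0 - (t • a') 0 : ℝ) ≤ fitz T p :=
    le_fitz_of_mem_graphOf p (q := (0, t • a')) (hT t)
  have hval : (t • a') p.1 + p.2 0 - (t • a') 0 = y + 1 := by
    simp only [smul_apply, smul_eq_mul, map_zero, add_zero, sub_zero, t, div_mul_cancel₀ _ hp]
  rw [hval] at hle
  exact lt_of_lt_of_le (EReal.coe_lt_coe_iff.2 (lt_add_one y)) hle

end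

theorem stmt12_general (A B : X → Set (X →L[ℝ] ℝ))
    (hAlin : IsLinearRelationOp A)
    (h0B : (0 : X →L[ℝ] ℝ) ∈ B 0)
    (z : X) (z' : X →L[ℝ] ℝ)
    (hlt : fitz (opSum A B) (z, z') < ((z' z : ℝ) : EReal)) :
    ∀ a' ∈ A 0, a' z = 0 := by
  intro a' ha'
  by_contra hz
  have hline : ∀ t : ℝ, t • a' ∈ opSum A B 0 := fun t =>
    mem_opSum_of_zero_mem_right (by simpa using hAlin.smul_mem ha' t) h0B
  rw [fitz_eq_top_of_forall_smul_mem hline (z, z') hz] at hlt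
  exact not_top_lt hlt

/-- If `A` is a monotone linear relation, `B` is monotone,
`(0, 0) ∈ gra A ∩ gra B`, and `F_{A + B} (z, z*) < ⟨z, z*⟩`, then `⟨z, a*⟩ = 0` for every
`a* ∈ A 0`, i.e. `z` lies in the pre-annihilator of `A 0`. -/
theorem stmt12 (A B : X → Set (X →L[ℝ] ℝ))
    (hAmono : IsMonotoneOp A) (hAlin : IsLinearRelationOp A)
    (hBmono : IsMonotoneOp B)
    (h0A : (0 : X →L[ℝ] ℝ) ∈ A 0) (h0B : (0 : X →L[ℝ] ℝ) ∈ B 0)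
    (z : X) (z' : X →L[ℝ] ℝ)
    (hlt : fitz (opSum A B) (z, z') < ((z' z : ℝ) : EReal)) :
    ∀ a' ∈ A 0, a' z = 0 :=
  stmt12_general A B hAlin h0B z z' hlt
end
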